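/- arXiv:2102.07245 — 3 statements merged into one kernel-verified Lean document; each statement's English description precedes it below -/
import Mathlib

section
/- (ADIANA+ variance bound, Lemma 4.) Let f_1, …, f_n : ℝ^d → ℝ be differentiable, convex, bounded below and L_i-smooth for symmetric positive semidefinite matrices L_i, and f = (1/n) Σ_i f_i. Let C_1, …, C_n be mutually independent sketches of proper samplings S_i with L̃max = max_i λmax(P̃_i ∘ L_i), let h_1, …, h_n be vectors with h_i ∈ range(L_i), and define g = (1/n) Σ_{i=1}^n [ L_i^{1/2} C_i L_i^{†1/2} (∇f_i(x) − h_i) + h_i ]. Then for all x, w ∈ ℝ^d: E[‖g − ∇f(x)‖²] ≤ (2 L̃max / n²) Σ_{i=1}^n ‖∇f_i(w) − ∇f_i(x)‖²_{L_i†} + (2 L̃max / n) H, where H = (1/n) Σ_{i=1}^n ‖∇f_i(w) − h_i‖²_{L_i†}. -/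
open scoped BigOperators RealInnerProductSpace
open Matrix

noncomputable section

/-- A proper sampling on `{1,…,d}`: a finitely supported probability distribution over
subsets of `Fin d` whose marginal probabilities are all positive. -/
structure Sampling (d : ℕ) where
  prob : Finset (Fin d) → ℝ
  nonneg : ∀ S, 0 ≤ prob S
  total : ∑ S : Finset (Fin d), prob S = 1
  margPos : ∀ j : Fin d, 0 < ∑ S : Finset (Fin d), if j ∈ S then prob S else 0

namespace Sampling

variable {d : ℕ} (μ : Sampling d)

/-- Marginal probability `p_j = Prob(j ∈ S)`. -/
def marg (j : Fin d) : ℝ := ∑ S : Finset (Fin d), if j ∈ S then μ.prob S else 0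

/-- Probability matrix `P`, with entries `p_{jl} = Prob({j,l} ⊆ S)`. -/
def probMatrix : Matrix (Fin d) (Fin d) ℝ :=
  Matrix.of fun j l => ∑ S : Finset (Fin d), if j ∈ S ∧ l ∈ S then μ.prob S else 0

/-- The matrix `P̄` with entries `p_{jl}/(p_j p_l)`. -/
def Pbar : Matrix (Fin d) (Fin d) ℝ :=
  Matrix.of fun j l => μ.probMatrix j l / (μ.marg j * μ.marg l)

/-- The matrix `P̃ = P̄ − E` where `E` is the all-ones matrix. -/
def Ptilde : Matrix (Fin d) (Fin d) ℝ := μ.Pbar - Matrix.of fun _ _ => (1 : ℝ)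

/-- The unbiased diagonal sketch `C` associated with a realization `S` of the sampling. -/
def sketch (S : Finset (Fin d)) : Matrix (Fin d) (Fin d) ℝ :=
  Matrix.diagonal fun j => if j ∈ S then (μ.marg j)⁻¹ else 0

end Sampling

/-- Largest eigenvalue of a symmetric matrix, via the Rayleigh quotient. -/
def lambdaMax {d : ℕ} (M : Matrix (Fin d) (Fin d) ℝ) : ℝ :=
  sSup {r : ℝ | ∃ v : Fin d → ℝ, v ⬝ᵥ v = 1 ∧ r = v ⬝ᵥ M.mulVec v}

/-- Smallest eigenvalue of a symmetric matrix, via the Rayleigh quotient. -/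
def lambdaMin {d : ℕ} (M : Matrix (Fin d) (Fin d) ℝ) : ℝ :=
  sInf {r : ℝ | ∃ v : Fin d → ℝ, v ⬝ᵥ v = 1 ∧ r = v ⬝ᵥ M.mulVec v}

/-- `Mdag` is the Moore–Penrose pseudoinverse of `M`. -/
def IsMoorePenrose {m n : Type*} [Fintype m] [Fintype n]
    (M : Matrix m n ℝ) (Mdag : Matrix n m ℝ) : Prop :=
  M * Mdag * M = M ∧ Mdag * M * Mdag = Mdag ∧
    (M * Mdag)ᵀ = M * Mdag ∧ (Mdag * M)ᵀ = Mdag * M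

/-- Vectors in `ℝ^d` with the Euclidean inner product. -/
abbrev Vec (d : ℕ) := EuclideanSpace ℝ (Fin d)

/-- Action of a matrix on a Euclidean vector. -/
def mact {d e : ℕ} (M : Matrix (Fin e) (Fin d) ℝ) (x : Vec d) : Vec e :=
  Matrix.toEuclideanLin M x

/-- Quadratic form `xᵀ M x`, i.e. the squared `M`-seminorm `‖x‖²_M`. -/
def quad {d : ℕ} (M : Matrix (Fin d) (Fin d) ℝ) (x : Vec d) : ℝ := ⟪x, mact M x⟫

/-- `f` is `M`-smooth: `f x ≤ f y + ⟨∇f(y), x−y⟩ + ½ (x−y)ᵀ M (x−y)` for all `x, y`. -/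
def MSmooth {d : ℕ} (f : Vec d → ℝ) (M : Matrix (Fin d) (Fin d) ℝ) : Prop :=
  ∀ x y : Vec d, f x ≤ f y + ⟪gradient f y, x - y⟫ + (1 / 2) * quad M (x - y)

/-- Random iterates driven by i.i.d. draws: `traj x0 step k ω` is the `k`-th iterate along
the sample path `ω` of `k` draws. -/
def traj {V Ω : Type*} (x0 : V) (step : V → Ω → V) : ∀ k : ℕ, (Fin k → Ω) → V
  | 0, _ => x0
  | k + 1, ω => step (traj x0 step k fun i => ω i.castSucc) (ω (Fin.last k))

/-- Expectation `E[φ(x^k)]` of a functional of the `k`-th iterate, over `k` i.i.d. draws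
with one-step distribution `P`. -/
def trajExp {V Ω : Type*} [Fintype Ω] (P : Ω → ℝ) (x0 : V) (step : V → Ω → V)
    (φ : V → ℝ) (k : ℕ) : ℝ :=
  ∑ ω : Fin k → Ω, (∏ i, P (ω i)) * φ (traj x0 step k ω)

/-!
Put `a_i = ∇f_i(x) - h_i` and `b_i = L_i^{†1/2} a_i`. Along a direction `v ∈ ker L`, `L`-smoothness
bounds `φ (x + t v)` by the affine function `φ x + t ⟪∇φ(x), v⟫`; since `φ` is bounded below,
`∇φ(x) ⟂ ker L`, i.e. `∇φ(x) ∈ range L`. Hence `a_i ∈ range L_i` and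
`L_i^{1/2} b_i = L_i L_i† a_i = a_i`, so the `i`-th summand of `n (g - ∇f(x))` is
`L_i^{1/2} (C_i - I) b_i`. It has mean zero because `E[C_i] = I`, and its second moment is
`b_iᵀ E[(C_i - I) L_i (C_i - I)] b_i = b_iᵀ (P̃_i ∘ L_i) b_i ≤ L̃max ‖a_i‖²_{L_i†}`.
By independence the cross terms of `E‖g - ∇f(x)‖²` vanish, and finally
`‖a_i‖²_{L†} ≤ 2 ‖∇f_i(w) - ∇f_i(x)‖²_{L†} + 2 ‖∇f_i(w) - h_i‖²_{L†}`.
-/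

open WithLp

section Euclidean

variable {d e : ℕ}

theorem ofLp_mact (M : Matrix (Fin e) (Fin d) ℝ) (x : Vec d) : ofLp (mact M x) = M *ᵥ ofLp x :=
  rfl

theorem inner_eq_dotProduct (x y : Vec d) : ⟪x, y⟫ = ofLp x ⬝ᵥ ofLp y :=
  dotProduct_comm _ _

theorem norm_sq_eq_dotProduct (x : Vec d) : ‖x‖ ^ 2 = ofLp x ⬝ᵥ ofLp x := by
  rw [← real_inner_self_eq_norm_sq, inner_eq_dotProduct]

theorem quad_eq_dotProduct (M : Matrix (Fin d) (Fin d) ℝ) (x : Vec d) :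
    quad M x = ofLp x ⬝ᵥ M *ᵥ ofLp x :=
  inner_eq_dotProduct _ _

theorem mact_mul {f : ℕ} (A : Matrix (Fin f) (Fin e) ℝ) (B : Matrix (Fin e) (Fin d) ℝ)
    (x : Vec d) : mact (A * B) x = mact A (mact B x) :=
  congrArg (toLp 2) (Matrix.mulVec_mulVec (ofLp x) A B).symm

theorem mact_sub (A B : Matrix (Fin e) (Fin d) ℝ) (x : Vec d) :
    mact (A - B) x = mact A x - mact B x := by
  simp [mact]

theorem mact_mul_sub_mact (B : Matrix (Fin e) (Fin d) ℝ) (C : Matrix (Fin d) (Fin d) ℝ)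
    (x : Vec d) : mact (B * C) x - mact B x = mact (B * (C - 1)) x := by
  rw [Matrix.mul_sub, Matrix.mul_one, mact_sub]

theorem mact_sum_smul {ι : Type*} (s : Finset ι) (c : ι → ℝ)
    (M : ι → Matrix (Fin e) (Fin d) ℝ) (x : Vec d) :
    mact (∑ i ∈ s, c i • M i) x = ∑ i ∈ s, c i • mact (M i) x := by
  simp [mact]

theorem quad_sum_smul {ι : Type*} (s : Finset ι) (c : ι → ℝ)
    (M : ι → Matrix (Fin d) (Fin d) ℝ) (x : Vec d) :
    quad (∑ i ∈ s, c i • M i) x = ∑ i ∈ s, c i * quad (M i) x := by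
  simp [quad, mact_sum_smul, inner_sum, inner_smul_right]

theorem quad_smul (M : Matrix (Fin d) (Fin d) ℝ) (c : ℝ) (x : Vec d) :
    quad M (c • x) = c ^ 2 * quad M x := by
  simp only [quad, mact, map_smul, real_inner_smul_left, real_inner_smul_right]
  ring

theorem norm_sq_mact (A : Matrix (Fin e) (Fin d) ℝ) (x : Vec d) :
    ‖mact A x‖ ^ 2 = quad (Aᵀ * A) x := by
  rw [norm_sq_eq_dotProduct, quad_eq_dotProduct, ofLp_mact, ← Matrix.mulVec_mulVec,
    Matrix.dotProduct_mulVec, ← Matrix.mulVec_transpose, dotProduct_comm]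

theorem Matrix.PosSemidef.quad_nonneg {M : Matrix (Fin d) (Fin d) ℝ} (hM : M.PosSemidef)
    (x : Vec d) : 0 ≤ quad M x := by
  simpa [quad_eq_dotProduct] using hM.dotProduct_mulVec_nonneg (ofLp x)

theorem Matrix.PosSemidef.quad_sub_le {M : Matrix (Fin d) (Fin d) ℝ} (hM : M.PosSemidef)
    (x y : Vec d) : quad M (x - y) ≤ 2 * quad M x + 2 * quad M y := by
  have := hM.quad_nonneg (x + y)
  simp only [quad_eq_dotProduct, ofLp_add, ofLp_sub, Matrix.mulVec_add, Matrix.mulVec_sub,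
    dotProduct_add, add_dotProduct, dotProduct_sub, sub_dotProduct] at *
  linarith

end Euclidean

section LambdaMax

variable {d : ℕ}

theorem bddAbove_rayleigh (M : Matrix (Fin d) (Fin d) ℝ) :
    BddAbove {r : ℝ | ∃ v : Fin d → ℝ, v ⬝ᵥ v = 1 ∧ r = v ⬝ᵥ M *ᵥ v} := by
  have hbdd : Bornology.IsBounded {v : Fin d → ℝ | v ⬝ᵥ v = 1} := by
    refine (Metric.isBounded_closedBall (x := 0) (r := 1)).subset fun v hv => ?_
    refine mem_closedBall_zero_iff.mpr ((pi_norm_le_iff_of_nonneg zero_le_one).mpr fun j => ?_)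
    have : v j * v j ≤ v ⬝ᵥ v := Finset.single_le_sum (f := fun j => v j * v j)
      (fun j _ => mul_self_nonneg (v j)) (Finset.mem_univ j)
    rw [Real.norm_eq_abs, ← abs_one, ← sq_le_sq, sq, one_pow]
    exact this.trans hv.le
  have hK : IsCompact {v : Fin d → ℝ | v ⬝ᵥ v = 1} :=
    Metric.isCompact_of_isClosed_isBounded (isClosed_eq (by fun_prop) continuous_const) hbdd
  refine ((hK.image (f := fun v => v ⬝ᵥ M *ᵥ v) (by fun_prop)).bddAbove).mono ?_
  rintro r ⟨v, hv, rfl⟩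
  exact ⟨v, hv, rfl⟩

theorem dotProduct_mulVec_le_lambdaMax_mul (M : Matrix (Fin d) (Fin d) ℝ) (v : Fin d → ℝ) :
    v ⬝ᵥ M *ᵥ v ≤ lambdaMax M * (v ⬝ᵥ v) := by
  rcases eq_or_ne v 0 with rfl | hv
  · simp
  have hpos : 0 < v ⬝ᵥ v := dotProduct_self_star_pos_iff.mpr hv
  set s := √(v ⬝ᵥ v)
  have hs : 0 < s := Real.sqrt_pos.mpr hpos
  have hss : s * s = v ⬝ᵥ v := Real.mul_self_sqrt hpos.le
  have hle : (s⁻¹ • v) ⬝ᵥ M *ᵥ (s⁻¹ • v) ≤ lambdaMax M :=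
    le_csSup (bddAbove_rayleigh M) ⟨s⁻¹ • v, by
      simp only [smul_dotProduct, dotProduct_smul, smul_eq_mul, ← hss]; field_simp, rfl⟩
  simp only [Matrix.mulVec_smul, smul_dotProduct, dotProduct_smul, smul_eq_mul] at hle
  calc v ⬝ᵥ M *ᵥ v = (s⁻¹ * (s⁻¹ * (v ⬝ᵥ M *ᵥ v))) * (s * s) := by field_simp
    _ ≤ lambdaMax M * (v ⬝ᵥ v) := hss ▸ mul_le_mul_of_nonneg_right hle (mul_self_nonneg s)

theorem quad_le_lambdaMax_mul_norm_sq (M : Matrix (Fin d) (Fin d) ℝ) (x : Vec d) :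
    quad M x ≤ lambdaMax M * ‖x‖ ^ 2 := by
  rw [quad_eq_dotProduct, norm_sq_eq_dotProduct]
  exact dotProduct_mulVec_le_lambdaMax_mul M _

theorem lambdaMax_nonneg {M : Matrix (Fin d) (Fin d) ℝ} (hM : ∀ j, 0 ≤ M j j) :
    0 ≤ lambdaMax M := by
  cases isEmpty_or_nonempty (Fin d) with
  | inl _ =>
    have : {r : ℝ | ∃ v : Fin d → ℝ, v ⬝ᵥ v = 1 ∧ r = v ⬝ᵥ M *ᵥ v} = ∅ := by
      ext r
      simp [dotProduct]
    rw [lambdaMax, this, Real.sSup_empty]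
  | inr h =>
    obtain ⟨j⟩ := h
    refine (hM j).trans ?_
    simpa [Matrix.mulVec_single, single_dotProduct] using
      dotProduct_mulVec_le_lambdaMax_mul M (Pi.single j 1)

end LambdaMax

section PseudoInverse

open scoped MatrixOrder Matrix.Norms.L2Operator

theorem Matrix.PosSemidef.transpose_eq {m : Type*} {A : Matrix m m ℝ} (hA : A.PosSemidef) :
    Aᵀ = A :=
  (Matrix.isHermitian_iff_isSymm.mp hA.isHermitian).eq

variable {m : Type*} [Fintype m]

theorem Matrix.PosSemidef.mul_self [DecidableEq m] {A : Matrix m m ℝ} (hA : A.PosSemidef) :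
    (A * A).PosSemidef := by
  simpa [sq] using hA.pow 2

theorem Commute.cfcSqrt_left [DecidableEq m] {A B : Matrix m m ℝ} (h : Commute A B) :
    Commute (CFC.sqrt A) B := by
  rw [CFC.sqrt_eq_cfc]
  exact h.cfc_nnreal _

theorem IsMoorePenrose.commute {L Ldag : Matrix m m ℝ} (hMP : IsMoorePenrose L Ldag)
    (hL : Lᵀ = L) (hLdag : Ldagᵀ = Ldag) : Commute L Ldag :=
  calc L * Ldag = (L * Ldag)ᵀ := hMP.2.2.1.symm
    _ = Ldag * L := by rw [Matrix.transpose_mul, hL, hLdag]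

theorem IsMoorePenrose.isIdempotentElem_mul {L Ldag : Matrix m m ℝ}
    (hMP : IsMoorePenrose L Ldag) : IsIdempotentElem (L * Ldag) := by
  rw [IsIdempotentElem, ← Matrix.mul_assoc, hMP.1]

/-- `R * Rdag` is a nonnegative square root of the projector `L * Ldag` (its factors commute,
being square roots of the commuting `L` and `Ldag`), hence equal to it. -/
theorem IsMoorePenrose.sqrt_mul_sqrt [DecidableEq m] {L Ldag R Rdag : Matrix m m ℝ}
    (hMP : IsMoorePenrose L Ldag) (hR : R.PosSemidef) (hRR : R * R = L)
    (hRdag : Rdag.PosSemidef) (hRRdag : Rdag * Rdag = Ldag) : R * Rdag = L * Ldag := by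
  have hsqrt : CFC.sqrt L = R := CFC.sqrt_unique hRR hR.nonneg
  have hsqrtdag : CFC.sqrt Ldag = Rdag := CFC.sqrt_unique hRRdag hRdag.nonneg
  have hL : Lᵀ = L := by rw [← hRR, Matrix.transpose_mul, hR.transpose_eq]
  have hLdag : Ldagᵀ = Ldag := by rw [← hRRdag, Matrix.transpose_mul, hRdag.transpose_eq]
  have hRLdag : Commute R Ldag := hsqrt ▸ (hMP.commute hL hLdag).cfcSqrt_left
  have hRRdag' : Commute R Rdag := (hsqrtdag ▸ hRLdag.symm.cfcSqrt_left).symm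
  have hP : 0 ≤ L * Ldag := by
    have : star (L * Ldag) = L * Ldag := by
      rw [Matrix.star_eq_conjTranspose, Matrix.conjTranspose_eq_transpose_of_trivial, hMP.2.2.1]
    simpa [this, hMP.isIdempotentElem_mul.eq] using star_mul_self_nonneg (L * Ldag)
  refine (CFC.sq_eq_sq_iff _ _ (hRRdag'.mul_nonneg hR.nonneg hRdag.nonneg) hP).mp ?_
  rw [sq, sq, hMP.isIdempotentElem_mul.eq, hRRdag'.symm.mul_mul_mul_comm, hRR, hRRdag]

end PseudoInverse

section Compression

variable {d : ℕ} {L Ldag R Rdag : Matrix (Fin d) (Fin d) ℝ}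

theorem IsMoorePenrose.mact_sqrt_mact_sqrt (hMP : IsMoorePenrose L Ldag) (hR : R.PosSemidef)
    (hRR : R * R = L) (hRdag : Rdag.PosSemidef) (hRRdag : Rdag * Rdag = Ldag) {a : Vec d}
    (ha : a ∈ Set.range (mact L)) : mact R (mact Rdag a) = a := by
  obtain ⟨u, rfl⟩ := ha
  rw [← mact_mul, hMP.sqrt_mul_sqrt hR hRR hRdag hRRdag, ← mact_mul, hMP.1]

theorem IsMoorePenrose.mact_compress_sub (hMP : IsMoorePenrose L Ldag) (hR : R.PosSemidef)
    (hRR : R * R = L) (hRdag : Rdag.PosSemidef) (hRRdag : Rdag * Rdag = Ldag) {a : Vec d}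
    (ha : a ∈ Set.range (mact L)) (C : Matrix (Fin d) (Fin d) ℝ) :
    mact (R * C * Rdag) a - a = mact (R * C) (mact Rdag a) - mact R (mact Rdag a) := by
  rw [mact_mul (R * C), hMP.mact_sqrt_mact_sqrt hR hRR hRdag hRRdag ha]

end Compression

namespace Sampling

variable {d : ℕ} (μ : Sampling d)

theorem marg_le_one (j : Fin d) : μ.marg j ≤ 1 :=
  μ.total ▸ Finset.sum_le_sum fun S _ => by split_ifs <;> simp [μ.nonneg S]

theorem Ptilde_apply_self (j : Fin d) : μ.Ptilde j j = (μ.marg j)⁻¹ - 1 := by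
  simp [Ptilde, Pbar, probMatrix, marg]

theorem lambdaMax_hadamard_Ptilde_nonneg {L : Matrix (Fin d) (Fin d) ℝ} (hL : L.PosSemidef) :
    0 ≤ lambdaMax (μ.Ptilde ⊙ L) :=
  lambdaMax_nonneg fun j => by
    rw [Matrix.hadamard_apply, Ptilde_apply_self]
    exact mul_nonneg (sub_nonneg.mpr ((one_le_inv₀ (μ.margPos j)).mpr (μ.marg_le_one j)))
      hL.diag_nonneg

theorem sketch_transpose (S : Finset (Fin d)) : (μ.sketch S)ᵀ = μ.sketch S :=
  Matrix.diagonal_transpose _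

theorem sum_prob_smul_sketch : ∑ S, μ.prob S • μ.sketch S = 1 := by
  ext j l
  rcases eq_or_ne j l with rfl | hjl
  · calc (∑ S, μ.prob S • μ.sketch S) j j
          = (∑ S, if j ∈ S then μ.prob S else 0) * (μ.marg j)⁻¹ := by
            simp only [Matrix.sum_apply, Finset.sum_mul]
            refine Finset.sum_congr rfl fun S _ => ?_
            by_cases hj : j ∈ S <;> simp [sketch, hj]
      _ = (1 : Matrix (Fin d) (Fin d) ℝ) j j := by
            rw [Matrix.one_apply_eq]
            exact mul_inv_cancel₀ (μ.margPos j).ne'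
  · simp [sketch, Matrix.sum_apply, Matrix.diagonal_apply_ne _ hjl, Matrix.one_apply_ne hjl]

theorem sum_prob_smul_sketch_mul_mul_sketch (M : Matrix (Fin d) (Fin d) ℝ) :
    ∑ S, μ.prob S • (μ.sketch S * M * μ.sketch S) = μ.Pbar ⊙ M := by
  ext j l
  have hentry : ∀ S, (μ.prob S • (μ.sketch S * M * μ.sketch S)) j l
      = (if j ∈ S ∧ l ∈ S then μ.prob S else 0) * ((μ.marg j)⁻¹ * M j l * (μ.marg l)⁻¹) := by
    intro S
    by_cases hj : j ∈ S <;> by_cases hl : l ∈ S <;> simp [sketch, hj, hl]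
  simp only [Matrix.sum_apply, hentry, ← Finset.sum_mul, Matrix.hadamard_apply, Pbar, probMatrix,
    Matrix.of_apply]
  field_simp

theorem sum_prob_smul_sketch_sub_one_mul_mul (M : Matrix (Fin d) (Fin d) ℝ) :
    ∑ S, μ.prob S • ((μ.sketch S - 1) * M * (μ.sketch S - 1)) = μ.Ptilde ⊙ M := by
  have hCM : ∑ S, μ.prob S • (μ.sketch S * M) = M := by
    simp_rw [← smul_mul_assoc, ← Finset.sum_mul, sum_prob_smul_sketch, one_mul]
  have hMC : ∑ S, μ.prob S • (M * μ.sketch S) = M := by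
    simp_rw [← mul_smul_comm, ← Finset.mul_sum, sum_prob_smul_sketch, mul_one]
  have hM : ∑ S, μ.prob S • M = M := by rw [← Finset.sum_smul, μ.total, one_smul]
  have hP : μ.Ptilde ⊙ M = μ.Pbar ⊙ M - M := by
    ext j l
    simp [Ptilde, sub_mul]
  simp only [sub_mul, mul_sub, one_mul, mul_one, smul_sub, Finset.sum_sub_distrib, hCM, hMC, hM,
    sum_prob_smul_sketch_mul_mul_sketch, hP]
  abel

theorem sum_prob_smul_mact_sketch_sub {e : ℕ} (B : Matrix (Fin e) (Fin d) ℝ) (b : Vec d) :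
    ∑ S, μ.prob S • (mact (B * μ.sketch S) b - mact B b) = 0 := by
  have hmean : ∑ S, μ.prob S • (μ.sketch S - 1) = 0 := by
    simp_rw [smul_sub, Finset.sum_sub_distrib, sum_prob_smul_sketch, ← Finset.sum_smul, μ.total,
      one_smul, sub_self]
  simp_rw [mact_mul_sub_mact, ← mact_sum_smul, ← Matrix.mul_smul, ← Matrix.mul_sum, hmean,
    Matrix.mul_zero]
  simp [mact]

theorem sum_prob_mul_norm_sq_mact_sketch_sub {e : ℕ} (B : Matrix (Fin e) (Fin d) ℝ) (b : Vec d) :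
    ∑ S, μ.prob S * ‖mact (B * μ.sketch S) b - mact B b‖ ^ 2 = quad (μ.Ptilde ⊙ (Bᵀ * B)) b := by
  have h : ∀ S, ‖mact (B * μ.sketch S) b - mact B b‖ ^ 2
      = quad ((μ.sketch S - 1) * (Bᵀ * B) * (μ.sketch S - 1)) b := by
    intro S
    rw [mact_mul_sub_mact, norm_sq_mact, Matrix.transpose_mul, Matrix.transpose_sub,
      μ.sketch_transpose, Matrix.transpose_one]
    simp only [Matrix.mul_assoc]
  simp_rw [h, ← quad_sum_smul, sum_prob_smul_sketch_sub_one_mul_mul]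

variable {L Ldag R Rdag : Matrix (Fin d) (Fin d) ℝ}

theorem sum_prob_smul_compress_sub (hMP : IsMoorePenrose L Ldag) (hR : R.PosSemidef)
    (hRR : R * R = L) (hRdag : Rdag.PosSemidef) (hRRdag : Rdag * Rdag = Ldag) {a : Vec d}
    (ha : a ∈ Set.range (mact L)) :
    ∑ S, μ.prob S • (mact (R * μ.sketch S * Rdag) a - a) = 0 := by
  simp_rw [hMP.mact_compress_sub hR hRR hRdag hRRdag ha]
  exact μ.sum_prob_smul_mact_sketch_sub R _

theorem sum_prob_mul_norm_sq_compress_sub_le (hMP : IsMoorePenrose L Ldag) (hR : R.PosSemidef)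
    (hRR : R * R = L) (hRdag : Rdag.PosSemidef) (hRRdag : Rdag * Rdag = Ldag) {Λ : ℝ}
    (hΛ : lambdaMax (μ.Ptilde ⊙ L) ≤ Λ) {u v : Vec d} (huv : u - v ∈ Set.range (mact L)) :
    ∑ S, μ.prob S * ‖mact (R * μ.sketch S * Rdag) (u - v) - (u - v)‖ ^ 2
      ≤ Λ * (2 * quad Ldag u + 2 * quad Ldag v) := by
  have hLdag : Ldag.PosSemidef := hRRdag ▸ hRdag.mul_self
  simp_rw [hMP.mact_compress_sub hR hRR hRdag hRRdag huv]
  rw [μ.sum_prob_mul_norm_sq_mact_sketch_sub, hR.transpose_eq, hRR]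
  calc quad (μ.Ptilde ⊙ L) (mact Rdag (u - v))
      ≤ lambdaMax (μ.Ptilde ⊙ L) * ‖mact Rdag (u - v)‖ ^ 2 := quad_le_lambdaMax_mul_norm_sq _ _
    _ = lambdaMax (μ.Ptilde ⊙ L) * quad Ldag (u - v) := by
        rw [norm_sq_mact, hRdag.transpose_eq, hRRdag]
    _ ≤ Λ * (2 * quad Ldag u + 2 * quad Ldag v) :=
        mul_le_mul hΛ (hLdag.quad_sub_le u v) (hLdag.quad_nonneg _)
          ((μ.lambdaMax_hadamard_Ptilde_nonneg (hRR ▸ hR.mul_self)).trans hΛ)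

end Sampling

section IndependentSum

variable {ι Ω : Type*} [Fintype ι] [DecidableEq ι] [Fintype Ω] {p : ι → Ω → ℝ}

theorem sum_prod_mul_prod (p q : ι → Ω → ℝ) :
    ∑ ω : ι → Ω, (∏ j, p j (ω j)) * ∏ j, q j (ω j) = ∏ j, ∑ s, p j s * q j s := by
  simp_rw [← Finset.prod_mul_distrib, Fintype.prod_sum]

theorem sum_prod_mul_apply (hp : ∀ j, ∑ s, p j s = 1) (i : ι) (φ : Ω → ℝ) :
    ∑ ω : ι → Ω, (∏ j, p j (ω j)) * φ (ω i) = ∑ s, p i s * φ s := by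
  have h := sum_prod_mul_prod p fun j s => if j = i then φ s else 1
  simp only [Finset.prod_ite_eq', Finset.mem_univ, if_true] at h
  rw [h, Finset.prod_eq_single i (fun j _ hj => by simp [hj, hp j]) (by simp)]
  simp

theorem sum_prod_mul_apply_mul_apply (hp : ∀ j, ∑ s, p j s = 1) {i k : ι} (hik : i ≠ k)
    (φ ψ : Ω → ℝ) :
    ∑ ω : ι → Ω, (∏ j, p j (ω j)) * (φ (ω i) * ψ (ω k))
      = (∑ s, p i s * φ s) * ∑ s, p k s * ψ s := by
  set q : ι → Ω → ℝ := fun j s => if j = i then φ s else if j = k then ψ s else 1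
  have hq : ∀ ω : ι → Ω, φ (ω i) * ψ (ω k) = ∏ j, q j (ω j) := fun ω => by
    rw [Fintype.prod_eq_mul (f := fun j => q j (ω j)) i k hik
      (fun j hj => by simp [q, hj.1, hj.2])]
    simp [q, hik.symm]
  rw [Finset.sum_congr rfl fun ω _ => congrArg _ (hq ω), sum_prod_mul_prod,
    Fintype.prod_eq_mul (f := fun j => ∑ s, p j s * q j s) i k hik
      (fun j hj => by simp [q, hj.1, hj.2, hp j])]
  simp [q, hik.symm]

theorem sum_prod_mul_apply_apply (hp : ∀ j, ∑ s, p j s = 1) {i k : ι} (hik : i ≠ k)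
    (Φ : Ω → Ω → ℝ) :
    ∑ ω : ι → Ω, (∏ j, p j (ω j)) * Φ (ω i) (ω k) = ∑ s, ∑ t, p i s * p k t * Φ s t := by
  classical
  calc ∑ ω : ι → Ω, (∏ j, p j (ω j)) * Φ (ω i) (ω k)
      = ∑ ω : ι → Ω, ∑ s, ∑ t, (∏ j, p j (ω j)) *
          ((if ω i = s then 1 else 0) * (if ω k = t then 1 else 0)) * Φ s t := by
        simp
    _ = ∑ s, ∑ t, p i s * p k t * Φ s t := by
        rw [Finset.sum_comm]
        refine Finset.sum_congr rfl fun s _ => ?_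
        rw [Finset.sum_comm]
        refine Finset.sum_congr rfl fun t _ => ?_
        rw [← Finset.sum_mul, sum_prod_mul_apply_mul_apply hp hik (fun u => if u = s then 1 else 0)
          (fun u => if u = t then 1 else 0)]
        simp

theorem sum_prod_mul_inner_eq_zero {E : Type*} [NormedAddCommGroup E] [InnerProductSpace ℝ E]
    (hp : ∀ j, ∑ s, p j s = 1) {i k : ι} (hik : i ≠ k) (X Y : Ω → E)
    (hX : ∑ s, p i s • X s = 0) :
    ∑ ω : ι → Ω, (∏ j, p j (ω j)) * ⟪X (ω i), Y (ω k)⟫ = 0 := by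
  rw [sum_prod_mul_apply_apply hp hik fun s t => ⟪X s, Y t⟫]
  calc ∑ s, ∑ t, p i s * p k t * ⟪X s, Y t⟫ = ⟪∑ s, p i s • X s, ∑ t, p k t • Y t⟫ := by
        rw [sum_inner]
        simp_rw [inner_sum, real_inner_smul_left, real_inner_smul_right, mul_assoc]
    _ = 0 := by rw [hX, inner_zero_left]

theorem sum_prod_mul_norm_sq_sum {E : Type*} [NormedAddCommGroup E] [InnerProductSpace ℝ E]
    (hp : ∀ j, ∑ s, p j s = 1) (Z : ι → Ω → E) (hZ : ∀ i, ∑ s, p i s • Z i s = 0) :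
    ∑ ω : ι → Ω, (∏ j, p j (ω j)) * ‖∑ i, Z i (ω i)‖ ^ 2 = ∑ i, ∑ s, p i s * ‖Z i s‖ ^ 2 := by
  simp_rw [← real_inner_self_eq_norm_sq, sum_inner, inner_sum, Finset.mul_sum]
  rw [Finset.sum_comm]
  refine Finset.sum_congr rfl fun i _ => ?_
  rw [Finset.sum_comm, Finset.sum_eq_single i
    (fun k _ hki => sum_prod_mul_inner_eq_zero hp hki.symm _ _ (hZ i)) (by simp)]
  exact sum_prod_mul_apply hp i fun s => ⟪Z i s, Z i s⟫

end IndependentSum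

section Smoothness

variable {d : ℕ} {φ : Vec d → ℝ} {M : Matrix (Fin d) (Fin d) ℝ}

theorem MSmooth.inner_gradient_eq_zero (hφ : MSmooth φ M) (hbdd : BddBelow (Set.range φ))
    (x : Vec d) {v : Vec d} (hv : mact M v = 0) : ⟪gradient φ x, v⟫ = 0 := by
  obtain ⟨b, hb⟩ := hbdd
  have hquad : quad M v = 0 := by simp [quad, hv]
  have hdescent : ∀ t : ℝ, b ≤ φ x + t * ⟪gradient φ x, v⟫ := fun t => by
    have := hφ (x + t • v) x
    rw [add_sub_cancel_left, quad_smul, hquad, real_inner_smul_right] at this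
    linarith [hb ⟨x + t • v, rfl⟩]
  by_contra hne
  have := hdescent ((b - φ x - 1) / ⟪gradient φ x, v⟫)
  rw [div_mul_cancel₀ _ hne] at this
  linarith

theorem MSmooth.gradient_mem_range (hφ : MSmooth φ M) (hM : M.IsHermitian)
    (hbdd : BddBelow (Set.range φ)) (x : Vec d) :
    gradient φ x ∈ Set.range (mact M) := by
  have hsymm := Matrix.isSymmetric_toEuclideanLin_iff.mpr hM
  have : gradient φ x ∈ (LinearMap.ker (Matrix.toEuclideanLin M))ᗮ := fun v hv => by
    rw [real_inner_comm]
    exact hφ.inner_gradient_eq_zero hbdd x hv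
  rwa [LinearMap.orthogonal_ker, hsymm.adjoint_eq] at this

end Smoothness

theorem gradient_const_mul_sum {F ι : Type*} [NormedAddCommGroup F] [InnerProductSpace ℝ F]
    [CompleteSpace F] (s : Finset ι) (φ : ι → F → ℝ) (c : ℝ) {x : F}
    (hφ : ∀ i ∈ s, DifferentiableAt ℝ (φ i) x) :
    gradient (fun y => c * ∑ i ∈ s, φ i y) x = c • ∑ i ∈ s, gradient (φ i) x := by
  refine HasGradientAt.gradient ?_
  rw [hasGradientAt_iff_hasFDerivAt, map_smul, map_sum]
  exact (HasFDerivAt.fun_sum fun i hi => ((hφ i hi).hasGradientAt).hasFDerivAt).const_mul c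

theorem statement13_general {d n : ℕ} (μs : Fin n → Sampling d)
    (fi : Fin n → Vec d → ℝ) (Li Lih Lidag Lidh : Fin n → Matrix (Fin d) (Fin d) ℝ)
    (hLi : ∀ i, (Li i).PosSemidef)
    (hfi : ∀ i, Differentiable ℝ (fi i) ∧ ConvexOn ℝ Set.univ (fi i) ∧
      BddBelow (Set.range (fi i)) ∧ MSmooth (fi i) (Li i))
    (hLih : ∀ i, (Lih i).PosSemidef ∧ Lih i * Lih i = Li i)
    (hLidag : ∀ i, IsMoorePenrose (Li i) (Lidag i))
    (hLidh : ∀ i, (Lidh i).PosSemidef ∧ Lidh i * Lidh i = Lidag i)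
    (f : Vec d → ℝ) (hf : f = fun x => (1 / (n : ℝ)) * ∑ i, fi i x)
    (Ltilmax : ℝ) (hLtilmax : Ltilmax = ⨆ i, lambdaMax (Matrix.hadamard (μs i).Ptilde (Li i)))
    (h : Fin n → Vec d) (hh : ∀ i, h i ∈ Set.range (mact (Li i)))
    (x : Vec d) (g : (Fin n → Finset (Fin d)) → Vec d)
    (hg : g = fun ω => (1 / (n : ℝ)) •
      ∑ i, (mact (Lih i * (μs i).sketch (ω i) * Lidh i) (gradient (fi i) x - h i) + h i)) :
    ∀ w : Vec d,
      (∑ ω : Fin n → Finset (Fin d),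
          (∏ i, (μs i).prob (ω i)) * ‖g ω - gradient f x‖ ^ 2)
        ≤ (2 * Ltilmax / (n : ℝ) ^ 2)
            * ∑ i, quad (Lidag i) (gradient (fi i) w - gradient (fi i) x)
          + (2 * Ltilmax / (n : ℝ))
            * ((1 / (n : ℝ)) * ∑ i, quad (Lidag i) (gradient (fi i) w - h i)) := by
  intro w
  -- `a i = ∇f_i(x) - h_i`, written as the difference that the final bound splits
  set a : Fin n → Vec d :=
    fun i => (gradient (fi i) w - h i) - (gradient (fi i) w - gradient (fi i) x)
  set Z : Fin n → Finset (Fin d) → Vec d :=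
    fun i S => mact (Lih i * (μs i).sketch S * Lidh i) (a i) - a i
  have ha : ∀ i, a i ∈ Set.range (mact (Li i)) := fun i => by
    simp only [a, sub_sub_sub_cancel_left]
    exact (LinearMap.range (Matrix.toEuclideanLin (Li i))).sub_mem
      ((hfi i).2.2.2.gradient_mem_range (hLi i).isHermitian (hfi i).2.2.1 x) (hh i)
  have hdiff : ∀ ω, g ω - gradient f x = (1 / (n : ℝ)) • ∑ i, Z i (ω i) := fun ω => by
    rw [hg, hf, gradient_const_mul_sum _ _ _ fun i _ => (hfi i).1 x, ← smul_sub,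
      ← Finset.sum_sub_distrib]
    simp only [Z, a, sub_sub_sub_cancel_left]
    congr 1
    exact Finset.sum_congr rfl fun i _ => by abel
  have hmean : ∀ i, ∑ S, (μs i).prob S • Z i S = 0 := fun i =>
    (μs i).sum_prob_smul_compress_sub (hLidag i) (hLih i).1 (hLih i).2 (hLidh i).1 (hLidh i).2
      (ha i)
  have hle : ∀ i, lambdaMax ((μs i).Ptilde ⊙ Li i) ≤ Ltilmax := fun i =>
    hLtilmax ▸ le_ciSup (f := fun i => lambdaMax ((μs i).Ptilde ⊙ Li i))
      (Set.finite_range _).bddAbove i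
  have hvar := fun i => (μs i).sum_prob_mul_norm_sq_compress_sub_le (hLidag i) (hLih i).1
    (hLih i).2 (hLidh i).1 (hLidh i).2 (hle i) (ha i)
  calc ∑ ω : Fin n → Finset (Fin d), (∏ i, (μs i).prob (ω i)) * ‖g ω - gradient f x‖ ^ 2
      = (1 / (n : ℝ)) ^ 2 * ∑ i, ∑ S, (μs i).prob S * ‖Z i S‖ ^ 2 := by
        simp_rw [hdiff, norm_smul, mul_pow, Real.norm_eq_abs, sq_abs,
          mul_left_comm _ ((1 / (n : ℝ)) ^ 2)]
        rw [← Finset.mul_sum, sum_prod_mul_norm_sq_sum (fun i => (μs i).total) Z hmean]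
    _ ≤ (1 / (n : ℝ)) ^ 2 * ∑ i, Ltilmax * (2 * quad (Lidag i) (gradient (fi i) w - h i)
          + 2 * quad (Lidag i) (gradient (fi i) w - gradient (fi i) x)) := by
        gcongr
        exact hvar _
    _ = _ := by
        simp only [Finset.mul_sum]
        rw [← Finset.sum_add_distrib]
        exact Finset.sum_congr rfl fun i _ => by ring

/-- ADIANA+ variance bound (Lemma 4). With `h_i ∈ range(L_i)` and
`g = (1/n) Σ_i [C̄_i (∇f_i(x) − h_i) + h_i]`,
`E‖g − ∇f(x)‖² ≤ (2L̃max/n²) Σ_i ‖∇f_i(w) − ∇f_i(x)‖²_{L_i†} + (2L̃max/n) H`,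
where `H = (1/n) Σ_i ‖∇f_i(w) − h_i‖²_{L_i†}`. -/
theorem statement13 {d n : ℕ} (hn : 0 < n) (μs : Fin n → Sampling d)
    (fi : Fin n → Vec d → ℝ) (Li Lih Lidag Lidh : Fin n → Matrix (Fin d) (Fin d) ℝ)
    (hLi : ∀ i, (Li i).PosSemidef)
    (hfi : ∀ i, Differentiable ℝ (fi i) ∧ ConvexOn ℝ Set.univ (fi i) ∧
      BddBelow (Set.range (fi i)) ∧ MSmooth (fi i) (Li i))
    (hLih : ∀ i, (Lih i).PosSemidef ∧ Lih i * Lih i = Li i)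
    (hLidag : ∀ i, IsMoorePenrose (Li i) (Lidag i))
    (hLidh : ∀ i, (Lidh i).PosSemidef ∧ Lidh i * Lidh i = Lidag i)
    (f : Vec d → ℝ) (hf : f = fun x => (1 / (n : ℝ)) * ∑ i, fi i x)
    (Ltilmax : ℝ) (hLtilmax : Ltilmax = ⨆ i, lambdaMax (Matrix.hadamard (μs i).Ptilde (Li i)))
    (h : Fin n → Vec d) (hh : ∀ i, h i ∈ Set.range (mact (Li i)))
    (x : Vec d) (g : (Fin n → Finset (Fin d)) → Vec d)
    (hg : g = fun ω => (1 / (n : ℝ)) •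
      ∑ i, (mact (Lih i * (μs i).sketch (ω i) * Lidh i) (gradient (fi i) x - h i) + h i)) :
    ∀ w : Vec d,
      (∑ ω : Fin n → Finset (Fin d),
          (∏ i, (μs i).prob (ω i)) * ‖g ω - gradient f x‖ ^ 2)
        ≤ (2 * Ltilmax / (n : ℝ) ^ 2)
            * ∑ i, quad (Lidag i) (gradient (fi i) w - gradient (fi i) x)
          + (2 * Ltilmax / (n : ℝ))
            * ((1 / (n : ℝ)) * ∑ i, quad (Lidag i) (gradient (fi i) w - h i)) :=
  statement13_general μs fi Li Lih Lidag Lidh hLi hfi hLih hLidag hLidh f hf Ltilmax hLtilmax h hh x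
    g hg

end
end

section
/- (Fixed-sketch indistinguishability lower bound.) Let B be a symmetric positive definite d×d real matrix, S an s×d real matrix, and x ∈ ℝ^d with ‖x‖_B = 1. Define x† = B^{-1} Sᵀ (S B^{-1} Sᵀ)† S x and x^S = 2 x† − x, where (·)† is the Moore–Penrose pseudoinverse. Then: S x† = S x, ⟨x†, x† − x⟩_B = 0, ‖x^S‖_B = 1, S x^S = S x, and for every function D : ℝ^s → ℝ^d, max( ‖D(S x) − x‖²_B , ‖D(S x^S) − x^S‖²_B ) ≥ ‖x† − x‖²_B = 1 − ‖x†‖²_B. Moreover, if S has trivial kernel then x† = x. -/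
open scoped BigOperators RealInnerProductSpace
open Matrix

noncomputable section

/-! `x† = B⁻¹Sᵀ(SB⁻¹Sᵀ)†Sx` is the `B`-orthogonal projection of `x` onto the range of
`B⁻¹Sᵀ`, along `ker S`. Since `S(x† − x) = 0`, the vectors `x` and its reflection
`x^S = 2x† − x` through that range carry the same sketch, and have the same `B`-norm.
A decoder output `c` is thus common to both, and the parallelogram law with
`c − x = (c − x†) + (x† − x)`, `c − x^S = (c − x†) − (x† − x)` shows that one of the two errors
is at least `‖x† − x‖²_B`. -/

namespace Matrix

variable {m n : Type*} [Fintype n]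

lemma diag_mul_mul_transpose (A : Matrix n n ℝ) (M : Matrix m n ℝ) (i : m) :
    (M * A * Mᵀ) i i = M i ⬝ᵥ A *ᵥ M i := by
  rw [Matrix.mul_assoc, mul_apply, dotProduct]
  simp only [mul_apply, mulVec, dotProduct, transpose_apply]

lemma PosDef.eq_zero_of_mul_mul_transpose_eq_zero {A : Matrix n n ℝ} (hA : A.PosDef)
    {M : Matrix m n ℝ} (h : M * A * Mᵀ = 0) : M = 0 := by
  funext i
  by_contra hi
  have hpos : 0 < M i ⬝ᵥ A *ᵥ M i := by simpa using hA.dotProduct_mulVec_pos (x := M i) hi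
  rw [← diag_mul_mul_transpose, h, zero_apply] at hpos
  exact hpos.false

lemma PosDef.mul_mul_transpose_mul_mul_eq [Fintype m] [DecidableEq m] {A : Matrix n n ℝ}
    (hA : A.PosDef) (S : Matrix m n ℝ) {G : Matrix m m ℝ}
    (hG : S * A * Sᵀ * G * (S * A * Sᵀ) = S * A * Sᵀ) :
    S * A * Sᵀ * G * S = S := by
  set N := S * A * Sᵀ
  have hR : (S - N * G * S) * A * (S - N * G * S)ᵀ = 0 := by
    have hfac : S - N * G * S = (1 - N * G) * S := by rw [Matrix.sub_mul, Matrix.one_mul]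
    calc (S - N * G * S) * A * (S - N * G * S)ᵀ = (1 - N * G) * N * (1 - N * G)ᵀ := by
          rw [hfac, transpose_mul]; simp only [N, Matrix.mul_assoc]
      _ = 0 := by rw [Matrix.sub_mul 1, Matrix.one_mul, hG, sub_self, Matrix.zero_mul]
  exact (sub_eq_zero.mp (hA.eq_zero_of_mul_mul_transpose_eq_zero hR)).symm

end Matrix

section BilinearForm

variable {n : Type*} [Fintype n] {B : Matrix n n ℝ}

lemma dotProduct_mulVec_comm_of_isSymm (hB : B.IsSymm) (u v : n → ℝ) :
    u ⬝ᵥ B *ᵥ v = v ⬝ᵥ B *ᵥ u := by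
  rw [dotProduct_mulVec, ← mulVec_transpose, hB.eq, dotProduct_comm]

lemma sub_dotProduct_mulVec_sub_of_orthogonal (hB : B.IsSymm) {x y : n → ℝ}
    (h : y ⬝ᵥ B *ᵥ (y - x) = 0) :
    (y - x) ⬝ᵥ B *ᵥ (y - x) = x ⬝ᵥ B *ᵥ x - y ⬝ᵥ B *ᵥ y := by
  have hxy := dotProduct_mulVec_comm_of_isSymm hB x y
  simp only [mulVec_sub, dotProduct_sub, sub_dotProduct] at h ⊢
  linear_combination 2 * h - hxy

lemma reflection_dotProduct_mulVec_of_orthogonal (hB : B.IsSymm) {x y : n → ℝ}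
    (h : y ⬝ᵥ B *ᵥ (y - x) = 0) :
    ((2 : ℝ) • y - x) ⬝ᵥ B *ᵥ ((2 : ℝ) • y - x) = x ⬝ᵥ B *ᵥ x := by
  have hxy := dotProduct_mulVec_comm_of_isSymm hB x y
  simp only [mulVec_sub, mulVec_smul, dotProduct_sub, sub_dotProduct, dotProduct_smul,
    smul_dotProduct, smul_eq_mul] at h ⊢
  linear_combination 4 * h - 2 * hxy

lemma dotProduct_mulVec_add_add_sub_sub (u v : n → ℝ) :
    (u + v) ⬝ᵥ B *ᵥ (u + v) + (u - v) ⬝ᵥ B *ᵥ (u - v) =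
      2 * u ⬝ᵥ B *ᵥ u + 2 * v ⬝ᵥ B *ᵥ v := by
  simp only [mulVec_add, mulVec_sub, dotProduct_add, dotProduct_sub, add_dotProduct,
    sub_dotProduct]
  ring

lemma sub_dotProduct_mulVec_sub_le_max_reflection (hB : B.PosSemidef) (x y c : n → ℝ) :
    (y - x) ⬝ᵥ B *ᵥ (y - x) ≤
      max ((c - x) ⬝ᵥ B *ᵥ (c - x))
        ((c - ((2 : ℝ) • y - x)) ⬝ᵥ B *ᵥ (c - ((2 : ℝ) • y - x))) := by
  have hpar := dotProduct_mulVec_add_add_sub_sub (B := B) (c - y) (y - x)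
  rw [show c - y + (y - x) = c - x by abel,
    show c - y - (y - x) = c - ((2 : ℝ) • y - x) by rw [two_smul]; abel] at hpar
  have hnn : 0 ≤ (c - y) ⬝ᵥ B *ᵥ (c - y) := by
    simpa using hB.dotProduct_mulVec_nonneg (c - y)
  set e₁ := (c - x) ⬝ᵥ B *ᵥ (c - x)
  set e₂ := (c - ((2 : ℝ) • y - x)) ⬝ᵥ B *ᵥ (c - ((2 : ℝ) • y - x))
  linarith [le_max_left e₁ e₂, le_max_right e₁ e₂]

end BilinearForm

section SketchProjection

variable {m n : Type*} [Fintype m] [Fintype n] [DecidableEq n]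
  {B : Matrix n n ℝ} {S : Matrix m n ℝ} {G : Matrix m m ℝ}

variable (B S G) in
/-- With `G = (SB⁻¹Sᵀ)†`, the map `x ↦ x†`: the `B`-orthogonal projection along `ker S`. -/
def sketchProjection : Matrix n n ℝ := B⁻¹ * Sᵀ * G * S

lemma sketch_mul_sketchProjection [DecidableEq m] (hB : B.PosDef)
    (hG : S * B⁻¹ * Sᵀ * G * (S * B⁻¹ * Sᵀ) = S * B⁻¹ * Sᵀ) :
    S * sketchProjection B S G = S := by
  simpa only [sketchProjection, Matrix.mul_assoc] using hB.inv.mul_mul_transpose_mul_mul_eq S hG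

lemma metric_mul_sketchProjection (hB : B.PosDef) :
    B * sketchProjection B S G = Sᵀ * G * S := by
  rw [sketchProjection, Matrix.mul_assoc, Matrix.mul_assoc,
    mul_nonsing_inv_cancel_left _ _ (isUnit_iff_ne_zero.mpr hB.det_pos.ne'), Matrix.mul_assoc]

lemma sketchProjection_orthogonal [DecidableEq m] (hB : B.PosDef)
    (hG : S * B⁻¹ * Sᵀ * G * (S * B⁻¹ * Sᵀ) = S * B⁻¹ * Sᵀ) (x : n → ℝ) :
    sketchProjection B S G *ᵥ x ⬝ᵥ B *ᵥ (sketchProjection B S G *ᵥ x - x) = 0 := by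
  have hS : S *ᵥ (sketchProjection B S G *ᵥ x - x) = 0 := by
    rw [mulVec_sub, mulVec_mulVec, sketch_mul_sketchProjection hB hG, sub_self]
  rw [dotProduct_mulVec, ← mulVec_transpose, (isHermitian_iff_isSymm.mp hB.isHermitian).eq,
    mulVec_mulVec, metric_mul_sketchProjection hB, Matrix.mul_assoc, ← mulVec_mulVec,
    mulVec_transpose, ← dotProduct_mulVec, hS, dotProduct_zero]

end SketchProjection

/-- fixed-sketch indistinguishability lower bound. With
`x† = B⁻¹Sᵀ(SB⁻¹Sᵀ)†Sx` and `x^S = 2x† − x` for a unit `B`-norm vector `x`: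
`Sx† = Sx`, `⟨x†, x†−x⟩_B = 0`, `‖x^S‖_B = 1`, `Sx^S = Sx`, every decoder incurs squared
error at least `‖x†−x‖²_B = 1 − ‖x†‖²_B` on one of `x, x^S`, and if `ker S = {0}` then
`x† = x`. -/
theorem statement17 {d s : ℕ} (B : Matrix (Fin d) (Fin d) ℝ) (hB : B.PosDef)
    (S : Matrix (Fin s) (Fin d) ℝ) (Ndag : Matrix (Fin s) (Fin s) ℝ)
    (hNdag : IsMoorePenrose (S * B⁻¹ * Sᵀ) Ndag)
    (x : Fin d → ℝ) (hx : x ⬝ᵥ B.mulVec x = 1)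
    (xdag xS : Fin d → ℝ)
    (hxdag : xdag = (B⁻¹ * Sᵀ * Ndag * S).mulVec x)
    (hxS : xS = (2 : ℝ) • xdag - x) :
    S.mulVec xdag = S.mulVec x ∧
    xdag ⬝ᵥ B.mulVec (xdag - x) = 0 ∧
    xS ⬝ᵥ B.mulVec xS = 1 ∧
    S.mulVec xS = S.mulVec x ∧
    (∀ D : (Fin s → ℝ) → (Fin d → ℝ),
      (xdag - x) ⬝ᵥ B.mulVec (xdag - x)
        ≤ max ((D (S.mulVec x) - x) ⬝ᵥ B.mulVec (D (S.mulVec x) - x))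
            ((D (S.mulVec xS) - xS) ⬝ᵥ B.mulVec (D (S.mulVec xS) - xS))) ∧
    (xdag - x) ⬝ᵥ B.mulVec (xdag - x) = 1 - xdag ⬝ᵥ B.mulVec xdag ∧
    ((∀ v : Fin d → ℝ, S.mulVec v = 0 → v = 0) → xdag = x) := by
  have hBsymm : B.IsSymm := isHermitian_iff_isSymm.mp hB.isHermitian
  have hsketch : S *ᵥ xdag = S *ᵥ x := by
    rw [hxdag, mulVec_mulVec, ← sketchProjection, sketch_mul_sketchProjection hB hNdag.1]
  have horth : xdag ⬝ᵥ B *ᵥ (xdag - x) = 0 := hxdag ▸ sketchProjection_orthogonal hB hNdag.1 x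
  have hsketchS : S *ᵥ xS = S *ᵥ x := by
    rw [hxS, mulVec_sub, mulVec_smul, hsketch, two_smul, add_sub_cancel_right]
  refine ⟨hsketch, horth, ?_, hsketchS, fun D => ?_, ?_, fun hker => ?_⟩
  · rw [hxS, reflection_dotProduct_mulVec_of_orthogonal hBsymm horth, hx]
  · rw [hsketchS, hxS]
    exact sub_dotProduct_mulVec_sub_le_max_reflection hB.posSemidef x xdag _
  · rw [sub_dotProduct_mulVec_sub_of_orthogonal hBsymm horth, hx]
  · exact sub_eq_zero.mp (hker _ (by rw [mulVec_sub, hsketch, sub_self]))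

end
end

section
/- (Optimal sketches achieve the variance–rank trade-off.) Let B be a symmetric positive definite d×d real matrix with eigendecomposition B = Q Λ Qᵀ, where Q is orthogonal and Λ is diagonal with positive diagonal entries. Let c = (c_1, …, c_d) be a random vector with entries in {0,1} and marginals Prob(c_j = 1) = p_j ∈ [0,1], and let C = Diag(c). Then: sup over x with ‖x‖_B = 1 of E‖Q C Qᵀ x − x‖²_B = 1 − min_{1≤j≤d} p_j, and E[ rank(C Qᵀ) ] = Σ_{j=1}^d p_j. In particular, if p_j = q ∈ [0,1] for all j, then the compression x ↦ Q C Qᵀ x (encoder S = C Qᵀ with decoder y ↦ Q y) has worst-case expected squared B-error 1 − q and expected rank q d, so that (worst-case error) + (expected rank)/d = 1. -/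
open scoped BigOperators RealInnerProductSpace
open Matrix

noncomputable section

/-! In the eigenbasis of `B`, i.e. with `y = Qᵀ x`, the error `Q Diag(c) Qᵀ x - x` has
coordinates `(c_j - 1) y_j`, so for a 0/1 mask its squared `B`-norm is
`∑_j (1 - c_j) λ_j y_j²`, and its expectation is `∑_j (1 - p_j) λ_j y_j²`. On the unit
`B`-sphere the weights `λ_j y_j²` sum to one, so this is an average of the numbers `1 - p_j`,
largest when all the weight sits on a coordinate of minimal `p_j`. The rank of `Diag(c) Qᵀ`
is the number of ones in `c`, whose expectation is `∑_j p_j`. -/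

namespace Matrix

section CommRing

variable {n R : Type*} [Fintype n] [DecidableEq n] [CommRing R]

theorem dotProduct_conj_diagonal_mulVec (Q : Matrix n n R) (f y : n → R) :
    y ⬝ᵥ (Q * diagonal f * Qᵀ) *ᵥ y = ∑ j, f j * (Qᵀ *ᵥ y) j ^ 2 := by
  rw [← mulVec_mulVec, ← mulVec_mulVec, dotProduct_mulVec, ← mulVec_transpose]
  simp only [dotProduct, mulVec_diagonal]
  exact Finset.sum_congr rfl fun j _ => by ring

theorem transpose_mulVec_conj_diagonal_mulVec_sub {Q : Matrix n n R} (hQ : Qᵀ * Q = 1)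
    (c x : n → R) :
    Qᵀ *ᵥ ((Q * diagonal c * Qᵀ) *ᵥ x - x) = fun j => (c j - 1) * (Qᵀ *ᵥ x) j := by
  have hcancel : Qᵀ * (Q * diagonal c * Qᵀ) = diagonal c * Qᵀ := by
    rw [Matrix.mul_assoc Q, ← Matrix.mul_assoc Qᵀ, hQ, Matrix.one_mul]
  funext j
  rw [mulVec_sub, mulVec_mulVec, hcancel, ← mulVec_mulVec]
  simp only [Pi.sub_apply, mulVec_diagonal]
  ring

theorem conj_diagonal_error_quad {Q : Matrix n n R} (hQ : Qᵀ * Q = 1) (lam : n → R)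
    {c : n → R} (hc : ∀ j, c j = 0 ∨ c j = 1) (x : n → R) :
    ((Q * diagonal c * Qᵀ) *ᵥ x - x) ⬝ᵥ
        (Q * diagonal lam * Qᵀ) *ᵥ ((Q * diagonal c * Qᵀ) *ᵥ x - x) =
      ∑ j, (1 - c j) * (lam j * (Qᵀ *ᵥ x) j ^ 2) := by
  rw [dotProduct_conj_diagonal_mulVec, transpose_mulVec_conj_diagonal_mulVec_sub hQ]
  refine Finset.sum_congr rfl fun j _ => ?_
  rcases hc j with h | h <;> simp only [h] <;> ring

theorem expected_conj_diagonal_error_quad {ι : Type*} [Fintype ι] {Q : Matrix n n R}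
    (hQ : Qᵀ * Q = 1) (lam : n → R) {w : ι → R} (hw1 : ∑ i, w i = 1) {c : ι → n → R}
    (hc : ∀ i j, c i j = 0 ∨ c i j = 1) {p : n → R} (hp : ∀ j, p j = ∑ i, w i * c i j)
    (x : n → R) :
    ∑ i, w i * (((Q * diagonal (c i) * Qᵀ) *ᵥ x - x) ⬝ᵥ
        (Q * diagonal lam * Qᵀ) *ᵥ ((Q * diagonal (c i) * Qᵀ) *ᵥ x - x)) =
      ∑ j, (1 - p j) * (lam j * (Qᵀ *ᵥ x) j ^ 2) := by
  simp only [conj_diagonal_error_quad hQ lam (hc _), Finset.mul_sum]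
  rw [Finset.sum_comm]
  refine Finset.sum_congr rfl fun j _ => ?_
  have hcompl : 1 - p j = ∑ i, w i * (1 - c i j) := by
    simp only [hp, mul_sub, mul_one, Finset.sum_sub_distrib, hw1]
  rw [hcompl, Finset.sum_mul]
  exact Finset.sum_congr rfl fun i _ => by ring

end CommRing

theorem rank_diagonal_mul_eq_sum {n K : Type*} [Fintype n] [DecidableEq n] [Field K]
    {Q : Matrix n n K} (hQ : Qᵀ * Q = 1) {c : n → K} (hc : ∀ j, c j = 0 ∨ c j = 1) :
    ((diagonal c * Qᵀ).rank : K) = ∑ j, c j := by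
  classical
  rw [rank_mul_eq_left_of_isUnit_det Qᵀ _ (isUnit_det_of_right_inverse hQ), rank_diagonal,
    Fintype.card_subtype, Finset.card_eq_sum_ones, Nat.cast_sum, Finset.sum_filter]
  refine Finset.sum_congr rfl fun j _ => ?_
  rcases hc j with h | h <;> simp [h]

end Matrix

open Matrix

theorem isGreatest_sum_mul_of_weighted_sq_eq_one {n : Type*} [Fintype n] {lam : n → ℝ}
    (hlam : ∀ j, 0 < lam j) {g : n → ℝ} {j₀ : n} (hj₀ : ∀ j, g j ≤ g j₀) :
    IsGreatest {e | ∃ y : n → ℝ, ∑ j, lam j * y j ^ 2 = 1 ∧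
      e = ∑ j, g j * (lam j * y j ^ 2)} (g j₀) := by
  classical
  constructor
  · set y : n → ℝ := Pi.single j₀ (Real.sqrt (lam j₀))⁻¹
    have hy : ∀ j, lam j * y j ^ 2 = if j = j₀ then 1 else 0 := by
      intro j
      by_cases h : j = j₀
      · subst h
        simp [y, inv_pow, Real.sq_sqrt (hlam j).le, (hlam j).ne']
      · simp [y, h]
    refine ⟨y, ?_, ?_⟩ <;> simp [hy]
  · rintro e ⟨y, hy, rfl⟩
    calc ∑ j, g j * (lam j * y j ^ 2) ≤ ∑ j, g j₀ * (lam j * y j ^ 2) :=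
          Finset.sum_le_sum fun j _ =>
            mul_le_mul_of_nonneg_right (hj₀ j) (mul_nonneg (hlam j).le (sq_nonneg _))
      _ = g j₀ := by rw [← Finset.mul_sum, hy, mul_one]

theorem isGreatest_conj_diagonal {n : Type*} [Fintype n] [DecidableEq n] {Q : Matrix n n ℝ}
    (hQ : Qᵀ * Q = 1) {lam : n → ℝ} (hlam : ∀ j, 0 < lam j) {g : n → ℝ} {j₀ : n}
    (hj₀ : ∀ j, g j ≤ g j₀) :
    IsGreatest {e | ∃ x : n → ℝ, x ⬝ᵥ (Q * diagonal lam * Qᵀ) *ᵥ x = 1 ∧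
      e = ∑ j, g j * (lam j * (Qᵀ *ᵥ x) j ^ 2)} (g j₀) := by
  have hsurj : Function.Surjective (Qᵀ *ᵥ ·) := fun y =>
    ⟨Q *ᵥ y, show Qᵀ *ᵥ (Q *ᵥ y) = y by rw [mulVec_mulVec, hQ, one_mulVec]⟩
  simp only [dotProduct_conj_diagonal_mulVec]
  convert isGreatest_sum_mul_of_weighted_sq_eq_one hlam hj₀ using 3 with e
  exact (hsurj.exists (p := fun y => ∑ j, lam j * y j ^ 2 = 1 ∧
    e = ∑ j, g j * (lam j * y j ^ 2))).symm

theorem statement19_general {d : ℕ} (hd : 0 < d) (B Q Λm : Matrix (Fin d) (Fin d) ℝ)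
    (lam : Fin d → ℝ) (hlam : ∀ j, 0 < lam j) (hΛ : Λm = Matrix.diagonal lam)
    (hQ1 : Qᵀ * Q = 1) (hB : B = Q * Λm * Qᵀ)
    {ι : Type} [Fintype ι] (w : ι → ℝ) (hw1 : ∑ i, w i = 1)
    (c : ι → Fin d → ℝ) (hc : ∀ i j, c i j = 0 ∨ c i j = 1)
    (p : Fin d → ℝ) (hp : ∀ j, p j = ∑ i, w i * c i j)
    (errSup : ℝ)
    (herr : errSup = sSup {e : ℝ | ∃ x : Fin d → ℝ, x ⬝ᵥ B.mulVec x = 1 ∧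
      e = ∑ i, w i * (((Q * Matrix.diagonal (c i) * Qᵀ).mulVec x - x) ⬝ᵥ
            B.mulVec ((Q * Matrix.diagonal (c i) * Qᵀ).mulVec x - x))})
    (expRank : ℝ)
    (hrk : expRank = ∑ i, w i * ((Matrix.diagonal (c i) * Qᵀ).rank : ℝ)) :
    errSup = 1 - ⨅ j, p j ∧
    expRank = ∑ j, p j ∧
    ∀ q : ℝ, (∀ j, p j = q) →
      errSup = 1 - q ∧ expRank = q * d ∧ errSup + expRank / (d : ℝ) = 1 := by
  have : Nonempty (Fin d) := ⟨⟨0, hd⟩⟩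
  obtain ⟨j₀, hj₀⟩ := exists_eq_ciInf_of_finite (f := p)
  have hmin : ∀ j, 1 - p j ≤ 1 - p j₀ := fun j => by
    linarith [hj₀ ▸ ciInf_le (Finite.bddBelow_range p) j]
  have hsup : errSup = 1 - ⨅ j, p j := by
    subst hB hΛ
    simp only [expected_conj_diagonal_error_quad hQ1 lam hw1 hc hp] at herr
    rw [herr, (isGreatest_conj_diagonal hQ1 hlam hmin).csSup_eq, hj₀]
  have hexp : expRank = ∑ j, p j := by
    simp only [hrk, rank_diagonal_mul_eq_sum hQ1 (hc _), Finset.mul_sum, hp]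
    exact Finset.sum_comm
  refine ⟨hsup, hexp, fun q hq => ?_⟩
  have hsup_q : errSup = 1 - q := by rw [hsup, ← hj₀, hq]
  have hexp_q : expRank = q * d := by simp [hexp, hq, mul_comm]
  refine ⟨hsup_q, hexp_q, ?_⟩
  rw [hsup_q, hexp_q]
  field_simp
  ring

/-- optimal sketches achieve the variance–rank trade-off. For
`B = Q Λ Qᵀ` and a random 0/1 diagonal `C = Diag(c)` with marginals `p_j`,
the worst-case expected squared `B`-error of `x ↦ Q C Qᵀ x` over the unit `B`-sphere is
`1 − min_j p_j` and `E[rank(C Qᵀ)] = Σ_j p_j`; in particular, with uniform marginals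
`p_j = q` the error is `1 − q`, the expected rank is `q d`, and
(worst-case error) + (expected rank)/d = 1. -/
theorem statement19 {d : ℕ} (hd : 0 < d) (B Q Λm : Matrix (Fin d) (Fin d) ℝ)
    (lam : Fin d → ℝ) (hlam : ∀ j, 0 < lam j) (hΛ : Λm = Matrix.diagonal lam)
    (hQ1 : Qᵀ * Q = 1) (hQ2 : Q * Qᵀ = 1) (hB : B = Q * Λm * Qᵀ)
    {ι : Type} [Fintype ι] (w : ι → ℝ) (hw : ∀ i, 0 ≤ w i) (hw1 : ∑ i, w i = 1)
    (c : ι → Fin d → ℝ) (hc : ∀ i j, c i j = 0 ∨ c i j = 1)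
    (p : Fin d → ℝ) (hp : ∀ j, p j = ∑ i, w i * c i j)
    (hp01 : ∀ j, 0 ≤ p j ∧ p j ≤ 1)
    (errSup : ℝ)
    (herr : errSup = sSup {e : ℝ | ∃ x : Fin d → ℝ, x ⬝ᵥ B.mulVec x = 1 ∧
      e = ∑ i, w i * (((Q * Matrix.diagonal (c i) * Qᵀ).mulVec x - x) ⬝ᵥ
            B.mulVec ((Q * Matrix.diagonal (c i) * Qᵀ).mulVec x - x))})
    (expRank : ℝ)
    (hrk : expRank = ∑ i, w i * ((Matrix.diagonal (c i) * Qᵀ).rank : ℝ)) :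
    errSup = 1 - ⨅ j, p j ∧
    expRank = ∑ j, p j ∧
    ∀ q : ℝ, (∀ j, p j = q) →
      errSup = 1 - q ∧ expRank = q * d ∧ errSup + expRank / (d : ℝ) = 1 :=
  statement19_general hd B Q Λm lam hlam hΛ hQ1 hB w hw1 c hc p hp errSup herr expRank hrk
end
end
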